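/- Fix n items with prices p_1 ≤ p_2 ≤ ... ≤ p_n, for each item a multiset of d real utilities, and a strict domination relation ≺ on the utilities linearly refining the numerical order. Since ≺ is a strict linear refinement, every chain of every perfect coupling is dominated by exactly one item, so Σ_i k_i(c) = d for every coupling c. If a perfect coupling c realizes K_{[i]} for every i ∈ {1,...,n}, then c minimizes the expected revenue among all perfect couplings: Σ_{i=1}^n p_i·k_i(c) ≤ Σ_{i=1}^n p_i·k_i(c') for every perfect coupling c'. -/
import Mathlib


noncomputable section

/-- A perfect coupling of `n` multisets of `d` utilities each: chain `t ∈ Fin d` consists of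
the utilities `(i, (c i) t)` for `i ∈ Fin n`, i.e. exactly one utility of every item. -/
abbrev Coupling (n d : ℕ) := Fin n → Equiv.Perm (Fin d)

/-- Chain `t` of the coupling `c` is dominated by item `i` (w.r.t. the strict domination
relation `prec` on utilities). -/
def DominatedBy {n d : ℕ} (prec : Fin n × Fin d → Fin n × Fin d → Prop)
    (c : Coupling n d) (i : Fin n) (t : Fin d) : Prop :=
  ∀ j : Fin n, j ≠ i → prec (j, c j t) (i, c i t)

/-- `k_i(c)`: the number of chains of `c` dominated by item `i`. -/
def kCount {n d : ℕ} (prec : Fin n × Fin d → Fin n × Fin d → Prop)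
    (c : Coupling n d) (i : Fin n) : ℕ :=
  Set.ncard {t : Fin d | DominatedBy prec c i t}

/-- `k_{[i]}(c)`: the number of chains of `c` dominated by one of the items `1,…,i`. -/
def kCum {n d : ℕ} (prec : Fin n × Fin d → Fin n × Fin d → Prop)
    (c : Coupling n d) (i : Fin n) : ℕ :=
  Set.ncard {t : Fin d | ∃ j : Fin n, j ≤ i ∧ DominatedBy prec c j t}

/-- `K_{[i]}`: the maximum of `k_{[i]}(c')` over all perfect couplings `c'`. -/
def Kmax {n d : ℕ} (prec : Fin n × Fin d → Fin n × Fin d → Prop) (i : Fin n) : ℕ :=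
  ⨆ c : Coupling n d, kCum prec c i

section Helpers

variable {n d : ℕ} (prec : Fin n × Fin d → Fin n × Fin d → Prop)

lemma finset_max
    (htrans : ∀ a b c : Fin n × Fin d, prec a b → prec b c → prec a c)
    (htotal : ∀ a b : Fin n × Fin d, a.1 ≠ b.1 → prec a b ∨ prec b a)
    (c : Coupling n d) (t : Fin d)
    (s : Finset (Fin n)) (hs : s.Nonempty) :
    ∃ i ∈ s, ∀ j ∈ s, j ≠ i → prec (j, c j t) (i, c i t) := by
  induction s using Finset.cons_induction with
  | empty => simp at hs
  | cons a s ha ih =>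
    rcases s.eq_empty_or_nonempty with rfl | hne
    · exact ⟨a, by simp, by simp⟩
    · obtain ⟨i, his, hi⟩ := ih hne
      have hai : a ≠ i := fun h => ha (h ▸ his)
      rcases htotal (a, c a t) (i, c i t) (by simpa) with h | h
      · refine ⟨i, Finset.mem_cons_of_mem his, ?_⟩
        intro j hj hji
        rcases Finset.mem_cons.mp hj with rfl | hj
        · exact h
        · exact hi j hj hji
      · refine ⟨a, Finset.mem_cons_self .., ?_⟩
        intro j hj hja
        rcases Finset.mem_cons.mp hj with rfl | hj
        · exact absurd rfl hja
        · rcases eq_or_ne j i with rfl | hji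
          · exact h
          · exact htrans _ _ _ (hi j hj hji) h

lemma existsUnique_dom (hn : 0 < n)
    (hasymm : ∀ a b : Fin n × Fin d, prec a b → ¬ prec b a)
    (htrans : ∀ a b c : Fin n × Fin d, prec a b → prec b c → prec a c)
    (htotal : ∀ a b : Fin n × Fin d, a.1 ≠ b.1 → prec a b ∨ prec b a)
    (c : Coupling n d) (t : Fin d) :
    ∃! i : Fin n, DominatedBy prec c i t := by
  have : Nonempty (Fin n) := ⟨⟨0, hn⟩⟩
  obtain ⟨i, -, hi⟩ := finset_max prec htrans htotal c t Finset.univ Finset.univ_nonempty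
  refine ⟨i, fun j hj => hi j (Finset.mem_univ j) hj, ?_⟩
  intro j hj
  by_contra hji
  exact hasymm _ _ (hj i (Ne.symm hji)) (hi j (Finset.mem_univ j) hji)

/-- cumulative count up to `m` items -/
def Kfun (c : Coupling n d) (m : ℕ) : ℕ :=
  Set.ncard {t : Fin d | ∃ j : Fin n, (j : ℕ) < m ∧ DominatedBy prec c j t}

lemma Kfun_zero (c : Coupling n d) : Kfun prec c 0 = 0 := by
  simp [Kfun]

lemma Kfun_succ (hn : 0 < n)
    (hasymm : ∀ a b : Fin n × Fin d, prec a b → ¬ prec b a)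
    (htrans : ∀ a b c : Fin n × Fin d, prec a b → prec b c → prec a c)
    (htotal : ∀ a b : Fin n × Fin d, a.1 ≠ b.1 → prec a b ∨ prec b a)
    (c : Coupling n d) (m : ℕ) (hm : m < n) :
    Kfun prec c (m + 1) = Kfun prec c m + kCount prec c ⟨m, hm⟩ := by
  have hset : {t : Fin d | ∃ j : Fin n, (j : ℕ) < m + 1 ∧ DominatedBy prec c j t}
      = {t : Fin d | ∃ j : Fin n, (j : ℕ) < m ∧ DominatedBy prec c j t}
        ∪ {t : Fin d | DominatedBy prec c ⟨m, hm⟩ t} := by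
    ext t
    simp only [Set.mem_setOf_eq, Set.mem_union]
    constructor
    · rintro ⟨j, hj, hdom⟩
      rcases Nat.lt_succ_iff_lt_or_eq.mp hj with hj | hj
      · exact Or.inl ⟨j, hj, hdom⟩
      · exact Or.inr (by have hje : j = ⟨m, hm⟩ := Fin.ext hj; exact hje ▸ hdom)
    · rintro (⟨j, hj, hdom⟩ | hdom)
      · exact ⟨j, Nat.lt_succ_of_lt hj, hdom⟩
      · exact ⟨⟨m, hm⟩, Nat.lt_succ_self m, hdom⟩
  have hdisj : Disjoint {t : Fin d | ∃ j : Fin n, (j : ℕ) < m ∧ DominatedBy prec c j t}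
      {t : Fin d | DominatedBy prec c ⟨m, hm⟩ t} := by
    rw [Set.disjoint_left]
    rintro t ⟨j, hj, hdom⟩ hdom'
    have huniq := existsUnique_dom prec hn hasymm htrans htotal c t
    have : j = ⟨m, hm⟩ := huniq.unique hdom hdom'
    rw [this] at hj
    exact absurd hj (lt_irrefl m)
  rw [Kfun, Kfun, kCount, hset, Set.ncard_union_eq hdisj (Set.toFinite _) (Set.toFinite _)]

lemma Kfun_top (hn : 0 < n)
    (hasymm : ∀ a b : Fin n × Fin d, prec a b → ¬ prec b a)
    (htrans : ∀ a b c : Fin n × Fin d, prec a b → prec b c → prec a c)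
    (htotal : ∀ a b : Fin n × Fin d, a.1 ≠ b.1 → prec a b ∨ prec b a)
    (c : Coupling n d) : Kfun prec c n = d := by
  have : {t : Fin d | ∃ j : Fin n, (j : ℕ) < n ∧ DominatedBy prec c j t} = Set.univ := by
    ext t
    simp only [Set.mem_setOf_eq, Set.mem_univ, iff_true]
    obtain ⟨i, hi, -⟩ := existsUnique_dom prec hn hasymm htrans htotal c t
    exact ⟨i, i.isLt, hi⟩
  rw [Kfun, this, Set.ncard_univ, Nat.card_eq_fintype_card, Fintype.card_fin]

lemma kCum_eq_Kfun (c : Coupling n d) (i : Fin n) :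
    kCum prec c i = Kfun prec c (i + 1) := by
  unfold kCum Kfun
  congr 1
  ext t
  simp only [Set.mem_setOf_eq]
  constructor
  · rintro ⟨j, hj, hdom⟩; exact ⟨j, Nat.lt_succ_of_le hj, hdom⟩
  · rintro ⟨j, hj, hdom⟩; exact ⟨j, Nat.lt_succ_iff.mp hj, hdom⟩

end Helpers

/-- Fix `n ≥ 1` items with nonnegative prices `p 0 ≤ p 1 ≤ … ≤ p (n-1)`, for
each item a multiset of `d` real utilities (sorted nonincreasingly), and a strict domination
relation `prec` on the utilities linearly refining the numerical order. Since `prec` is a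
strict linear refinement, every chain of every perfect coupling is dominated by exactly one
item, so `Σ_i k_i(c') = d` for every coupling `c'`. If a perfect coupling `c` realizes
`K_{[i]}` for every item `i`, then `c` minimizes the expected revenue among all perfect
couplings: `Σ_i p_i · k_i(c) ≤ Σ_i p_i · k_i(c')` for every perfect coupling `c'`. -/
theorem coupling_realizing_all_cumulative_maxima_minimizes_revenue
    (n d : ℕ) (hn : 0 < n) (u : Fin n → Fin d → ℝ)
    (hsorted : ∀ i : Fin n, Antitone (u i))
    (p : Fin n → ℝ) (hp0 : ∀ i, 0 ≤ p i) (hpmono : Monotone p)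
    (prec : Fin n × Fin d → Fin n × Fin d → Prop)
    (hrefines : ∀ a b : Fin n × Fin d, u a.1 a.2 < u b.1 b.2 → prec a b)
    (hasymm : ∀ a b : Fin n × Fin d, prec a b → ¬ prec b a)
    (htrans : ∀ a b c : Fin n × Fin d, prec a b → prec b c → prec a c)
    (htotal : ∀ a b : Fin n × Fin d, a.1 ≠ b.1 → prec a b ∨ prec b a)
    (c : Coupling n d) (hc : ∀ i : Fin n, kCum prec c i = Kmax prec i) :
    (∀ c' : Coupling n d, ∑ i : Fin n, kCount prec c' i = d) ∧
    (∀ c' : Coupling n d,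
      ∑ i : Fin n, p i * (kCount prec c i : ℝ) ≤ ∑ i : Fin n, p i * (kCount prec c' i : ℝ)) := by
  have hsum : ∀ (c' : Coupling n d), ∑ i : Fin n, kCount prec c' i = d := by
    intro c'
    set F : ℕ → ℕ := fun m => if h : m < n then kCount prec c' ⟨m, h⟩ else 0 with hF
    have h1 : ∑ i : Fin n, kCount prec c' i = ∑ i ∈ Finset.range n, F i := by
      rw [← Fin.sum_univ_eq_sum_range]
      refine Finset.sum_congr rfl fun i _ => ?_
      simp [hF, i.isLt]
    have h2 : ∀ m, m ≤ n → ∑ i ∈ Finset.range m, F i = Kfun prec c' m := by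
      intro m
      induction m with
      | zero => intro _; simp [Kfun_zero]
      | succ m ih =>
        intro hmn
        have hm : m < n := hmn
        rw [Finset.sum_range_succ, ih (le_of_lt hm),
          Kfun_succ prec hn hasymm htrans htotal c' m hm]
        simp [hF, hm]
    rw [h1, h2 n le_rfl, Kfun_top prec hn hasymm htrans htotal]
  refine ⟨hsum, ?_⟩
  intro c'
  have hKle : ∀ m : ℕ, m < n → (Kfun prec c' (m + 1) : ℝ) ≤ Kfun prec c (m + 1) := by
    intro m hm
    have h1 : kCum prec c' ⟨m, hm⟩ ≤ Kmax prec ⟨m, hm⟩ := by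
      rw [Kmax]
      exact le_ciSup (Set.finite_range fun c'' : Coupling n d => kCum prec c'' ⟨m, hm⟩).bddAbove c'
    rw [← hc ⟨m, hm⟩, kCum_eq_Kfun, kCum_eq_Kfun] at h1
    exact_mod_cast h1
  set D : ℕ → ℝ := fun m => (Kfun prec c' m : ℝ) - (Kfun prec c m : ℝ) with hD
  set q : ℕ → ℝ := fun m => if h : m < n then p ⟨m, h⟩ else 0 with hq
  have hD0 : D 0 = 0 := by simp [hD, Kfun_zero]
  have hDn : D n = 0 := by
    simp [hD, Kfun_top prec hn hasymm htrans htotal]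
  have hdiff : ∑ i : Fin n, p i * (kCount prec c' i : ℝ)
      - ∑ i : Fin n, p i * (kCount prec c i : ℝ)
      = ∑ m ∈ Finset.range n, q m • (D (m + 1) - D m) := by
    rw [← Finset.sum_sub_distrib, ← Fin.sum_univ_eq_sum_range]
    refine Finset.sum_congr rfl fun i _ => ?_
    have h1 : (Kfun prec c' ((i : ℕ) + 1) : ℝ)
        = (Kfun prec c' (i : ℕ) : ℝ) + (kCount prec c' i : ℝ) := by
      rw [Kfun_succ prec hn hasymm htrans htotal c' i i.isLt, Fin.eta]; push_cast; ring
    have h2 : (Kfun prec c ((i : ℕ) + 1) : ℝ)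
        = (Kfun prec c (i : ℕ) : ℝ) + (kCount prec c i : ℝ) := by
      rw [Kfun_succ prec hn hasymm htrans htotal c i i.isLt, Fin.eta]; push_cast; ring
    simp only [hq, hD, smul_eq_mul, dif_pos i.isLt, Fin.eta, h1, h2]
    ring
  have hG : ∀ k, ∑ m ∈ Finset.range k, (D (m + 1) - D m) = D k := by
    intro k; rw [Finset.sum_range_sub, hD0, sub_zero]
  have key : 0 ≤ ∑ m ∈ Finset.range n, q m • (D (m + 1) - D m) := by
    rw [Finset.sum_range_by_parts q (fun m => D (m + 1) - D m) n]
    simp only [hG, hDn, smul_zero, zero_sub, neg_nonneg]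
    apply Finset.sum_nonpos
    intro i hi
    rw [Finset.mem_range] at hi
    have hi1 : i + 1 < n := by omega
    have hi0 : i < n := by omega
    have hqm : 0 ≤ q (i + 1) - q i := by
      simp only [hq, dif_pos hi1, dif_pos hi0]
      exact sub_nonneg.mpr (hpmono (by simp [Fin.le_def]))
    have hDle : D (i + 1) ≤ 0 := sub_nonpos.mpr (hKle i hi0)
    rw [smul_eq_mul]
    exact mul_nonpos_of_nonneg_of_nonpos hqm hDle
  linarith [hdiff, key]
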